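/- arXiv:2408.11944 — 2 statements merged into one kernel-verified Lean document; each statement's English description precedes it below -/
import Mathlib

section
/- Let k < l < m be natural numbers, r ∈ ℕ, and let (x^ν)_{ν∈ℕ} be a sequence of double sequences x^ν : ℕ×ℕ → ℂ such that (i) i^r j^{-k} |x^ν_{ij}| < 1 for all ν, i, j, and (ii) for every real t > 0, sup_{i,j} i^t j^{-m} |x^ν_{ij}| → 0 as ν → ∞. Then for every natural number s > r, sup_{i,j} i^s j^{-l} |x^ν_{ij}| → 0 as ν → ∞. -/
/-!
Write `θ = (l - k) / (m - k) ∈ (0, 1)` and choose `t > 0` with `(1 - θ) r + θ t = s`. Since also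
`(1 - θ) k + θ m = l`, every weighted entry factors as
`i^s j^{-l} |x| = (i^r j^{-k} |x|)^{1-θ} (i^t j^{-m} |x|)^θ`, so the `(s, l)`-supremum is at most
the `(r, k)`-supremum, which is `≤ 1`, to the power `1 - θ`, times the `(t, m)`-supremum, which
tends to `0`, to the power `θ`.
-/

open ENNReal Filter

noncomputable def weightedSup (x : ℕ+ → ℕ+ → ℂ) (p q : ℝ) : ℝ≥0∞ :=
  ⨆ i : ℕ+, ⨆ j : ℕ+, ENNReal.ofReal ((i : ℝ) ^ p * (j : ℝ) ^ q * ‖x i j‖)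

lemma rpow_interpolate {a b A : ℝ} (ha : 0 < a) (hb : 0 < b) (hA : 0 ≤ A)
    (p p' q q' θ : ℝ) :
    a ^ ((1 - θ) * p + θ * q) * b ^ ((1 - θ) * p' + θ * q') * A =
      (a ^ p * b ^ p' * A) ^ (1 - θ) * (a ^ q * b ^ q' * A) ^ θ := by
  have hA_split : A = A ^ (1 - θ) * A ^ θ := by
    rw [← Real.rpow_add' hA (by norm_num)]; simp
  rw [Real.mul_rpow (by positivity) hA, Real.mul_rpow (by positivity) (by positivity),
    Real.mul_rpow (by positivity) hA, Real.mul_rpow (by positivity) (by positivity),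
    ← Real.rpow_mul ha.le, ← Real.rpow_mul hb.le, ← Real.rpow_mul ha.le, ← Real.rpow_mul hb.le,
    Real.rpow_add ha, Real.rpow_add hb]
  conv_lhs => rw [hA_split]
  ring_nf

lemma weightedSup_interpolate_le (x : ℕ+ → ℕ+ → ℂ) {θ : ℝ} (hθ₀ : 0 ≤ θ) (hθ₁ : θ ≤ 1)
    (p p' q q' : ℝ) :
    weightedSup x ((1 - θ) * p + θ * q) ((1 - θ) * p' + θ * q') ≤
      weightedSup x p p' ^ (1 - θ) * weightedSup x q q' ^ θ := by
  refine iSup₂_le fun i j => ?_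
  have hi : (0 : ℝ) < i := by exact_mod_cast i.pos
  have hj : (0 : ℝ) < j := by exact_mod_cast j.pos
  rw [rpow_interpolate hi hj (norm_nonneg _), ENNReal.ofReal_mul (by positivity),
    ← ENNReal.ofReal_rpow_of_nonneg (by positivity) (by linarith),
    ← ENNReal.ofReal_rpow_of_nonneg (by positivity) hθ₀]
  gcongr
  · exact le_iSup₂ (f := fun (i j : ℕ+) => ENNReal.ofReal ((i : ℝ) ^ p * (j : ℝ) ^ p' * ‖x i j‖))
      i j
  · exact le_iSup₂ (f := fun (i j : ℕ+) => ENNReal.ofReal ((i : ℝ) ^ q * (j : ℝ) ^ q' * ‖x i j‖))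
      i j

lemma tendsto_weightedSup_interpolate (x : ℕ → ℕ+ → ℕ+ → ℂ) {θ : ℝ} (hθ₀ : 0 < θ) (hθ₁ : θ ≤ 1)
    {p p' q q' : ℝ} (hbd : ∀ ν, weightedSup (x ν) p p' ≤ 1)
    (hconv : Tendsto (fun ν => weightedSup (x ν) q q') atTop (nhds 0)) :
    Tendsto (fun ν => weightedSup (x ν) ((1 - θ) * p + θ * q) ((1 - θ) * p' + θ * q'))
      atTop (nhds 0) := by
  have hlim : Tendsto (fun ν => weightedSup (x ν) q q' ^ θ) atTop (nhds 0) := by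
    simpa [ENNReal.zero_rpow_of_pos hθ₀] using hconv.ennrpow_const θ
  refine tendsto_of_tendsto_of_tendsto_of_le_of_le tendsto_const_nhds hlim (fun _ => zero_le)
    fun ν => ?_
  calc _ ≤ weightedSup (x ν) p p' ^ (1 - θ) * weightedSup (x ν) q q' ^ θ :=
        weightedSup_interpolate_le (x ν) hθ₀.le hθ₁ p p' q q'
    _ ≤ 1 * weightedSup (x ν) q q' ^ θ := by
        gcongr; exact ENNReal.rpow_le_one (hbd ν) (by linarith)
    _ = _ := one_mul _

theorem stmt_3 (k l m : ℕ) (hkl : k < l) (hlm : l < m) (r : ℕ)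
    (x : ℕ → ℕ+ → ℕ+ → ℂ)
    (hbd : ∀ ν : ℕ, ∀ i j : ℕ+,
      (i : ℝ) ^ (r : ℝ) * (j : ℝ) ^ (-(k : ℝ)) * ‖x ν i j‖ < 1)
    (hconv : ∀ t : ℝ, 0 < t →
      Tendsto (fun ν : ℕ => ⨆ i : ℕ+, ⨆ j : ℕ+,
        ENNReal.ofReal ((i : ℝ) ^ t * (j : ℝ) ^ (-(m : ℝ)) * ‖x ν i j‖))
        atTop (nhds 0)) :
    ∀ s : ℕ, r < s →
      Tendsto (fun ν : ℕ => ⨆ i : ℕ+, ⨆ j : ℕ+,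
        ENNReal.ofReal ((i : ℝ) ^ (s : ℝ) * (j : ℝ) ^ (-(l : ℝ)) * ‖x ν i j‖))
        atTop (nhds 0) := by
  intro s hs
  have hkl' : (k : ℝ) < l := by exact_mod_cast hkl
  have hlm' : (l : ℝ) < m := by exact_mod_cast hlm
  have hrs : (r : ℝ) < s := by exact_mod_cast hs
  set θ : ℝ := (l - k) / (m - k)
  have hθ₀ : 0 < θ := div_pos (by linarith) (by linarith)
  have hθ₁ : θ < 1 := (div_lt_one (by linarith)).2 (by linarith)
  set t : ℝ := (s - (1 - θ) * r) / θ
  have ht : 0 < t := div_pos (by nlinarith [(Nat.cast_nonneg r : (0 : ℝ) ≤ r)]) hθ₀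
  have hs_eq : (1 - θ) * r + θ * t = s := by
    rw [mul_div_cancel₀ _ hθ₀.ne']; ring
  have hl_eq : (1 - θ) * -(k : ℝ) + θ * -(m : ℝ) = -(l : ℝ) := by
    have hθm : θ * (m - k) = l - k := div_mul_cancel₀ _ (by linarith)
    linear_combination -hθm
  have hbd' : ∀ ν, weightedSup (x ν) r (-(k : ℝ)) ≤ 1 := fun ν =>
    iSup₂_le fun i j => ENNReal.ofReal_le_one.2 (hbd ν i j).le
  have := tendsto_weightedSup_interpolate x hθ₀ hθ₁.le hbd' (hconv t ht)
  rwa [hs_eq, hl_eq] at this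
end

section
/- For every k ∈ ℕ, 1 ≤ p < ∞ and every double sequence x : ℕ×ℕ → ℂ: if for all r ∈ ℕ one has ∑_j (sup_i i^r |x_{ij}|)^p · j^{-kp} < ∞, then for all r ∈ ℕ also sup_{i,j} i^r j^{-k'} |x_{ij}| < ∞ for every k' ≥ k; conversely, if for all r, sup_{i,j} i^r j^{-k} |x_{ij}| < ∞, then for all r, ∑_j (sup_i i^r |x_{ij}|)^p j^{-k'p} < ∞ whenever k' > k + 1/p. -/
open ENNReal

/-!
With `a j = ⨆ i, i ^ r * ‖x i j‖`, both conditions are weighted norms of the single sequence `a`.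
Each term of a convergent sum is bounded by the sum, so a finite `ℓ^p` norm of `a j * j ^ (-k)`
bounds `a j * j ^ (-k')` for `k ≤ k'`. Conversely `a j ≤ M * j ^ k` gives
`(a j * j ^ (-k')) ^ p ≤ M ^ p * j ^ (-(k' - k) * p)`, which is summable once `(k' - k) * p > 1`.
-/

noncomputable def polyWeight (k : ℝ) (j : ℕ+) : ℝ≥0∞ :=
  ENNReal.ofReal ((j : ℝ) ^ (-k))

section PolyWeight

variable {k l : ℝ} (j : ℕ+)

lemma polyWeight_antitone (hkl : k ≤ l) : polyWeight l j ≤ polyWeight k j :=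
  ENNReal.ofReal_le_ofReal <|
    Real.rpow_le_rpow_of_exponent_le (Nat.one_le_cast.mpr j.pos) (neg_le_neg hkl)

lemma polyWeight_add : polyWeight (k + l) j = polyWeight k j * polyWeight l j := by
  have hj : (0 : ℝ) < j := by exact_mod_cast j.pos
  rw [polyWeight, polyWeight, polyWeight, ← ENNReal.ofReal_mul (by positivity),
    ← Real.rpow_add hj, neg_add]

lemma polyWeight_rpow {p : ℝ} (hp : 0 ≤ p) : polyWeight k j ^ p = polyWeight (k * p) j := by
  rw [polyWeight, polyWeight, ENNReal.ofReal_rpow_of_nonneg (by positivity) hp,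
    ← Real.rpow_mul (by positivity), neg_mul]

lemma tsum_polyWeight_ne_top (hk : 1 < k) : ∑' j, polyWeight k j ≠ ⊤ := by
  have hsum : Summable fun j : ℕ+ => ((j : ℕ) : ℝ) ^ (-k) :=
    (Real.summable_nat_rpow.mpr (by linarith)).comp_injective PNat.coe_injective
  exact ENNReal.tsum_coe_ne_top_iff_summable.mpr hsum.toNNReal

end PolyWeight

lemma le_rpow_inv_tsum_rpow {ι : Type*} (f : ι → ℝ≥0∞) {p : ℝ} (hp : 0 < p) (i : ι) :
    f i ≤ (∑' j, f j ^ p) ^ p⁻¹ :=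
  (ENNReal.le_rpow_inv_iff hp).mpr (ENNReal.le_tsum i)

section WeightedNorms

variable {f : ℕ+ → ℝ≥0∞} {p k l : ℝ}

lemma iSup_mul_polyWeight_ne_top (hp : 0 < p) (hkl : k ≤ l)
    (hf : ∑' j, (f j * polyWeight k j) ^ p ≠ ⊤) : ⨆ j, f j * polyWeight l j ≠ ⊤ := by
  refine ne_top_of_le_ne_top (ENNReal.rpow_ne_top_of_nonneg (inv_nonneg.mpr hp.le) hf) ?_
  refine iSup_le fun j => ?_
  calc f j * polyWeight l j ≤ f j * polyWeight k j := by gcongr; exact polyWeight_antitone j hkl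
    _ ≤ _ := le_rpow_inv_tsum_rpow (fun j => f j * polyWeight k j) hp j

lemma tsum_rpow_mul_polyWeight_ne_top (hp : 0 < p) (hkl : k + 1 / p < l)
    (hf : ⨆ j, f j * polyWeight k j ≠ ⊤) : ∑' j, (f j * polyWeight l j) ^ p ≠ ⊤ := by
  set M := ⨆ j, f j * polyWeight k j
  have hterm : ∀ j, (f j * polyWeight l j) ^ p ≤ M ^ p * polyWeight ((l - k) * p) j := by
    intro j
    calc (f j * polyWeight l j) ^ p = (f j * polyWeight k j) ^ p * polyWeight (l - k) j ^ p := by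
          rw [← ENNReal.mul_rpow_of_nonneg _ _ hp.le, mul_assoc, ← polyWeight_add,
            add_sub_cancel]
      _ ≤ M ^ p * polyWeight ((l - k) * p) j := by
          rw [polyWeight_rpow j hp.le]
          gcongr
          exact le_iSup (fun j => f j * polyWeight k j) j
  have hexp : 1 < (l - k) * p := by
    rw [← div_lt_iff₀ hp]
    linarith
  refine ne_top_of_le_ne_top ?_ (ENNReal.tsum_le_tsum hterm)
  rw [ENNReal.tsum_mul_left]
  exact ENNReal.mul_ne_top (ENNReal.rpow_ne_top_of_nonneg hp.le hf)
    (tsum_polyWeight_ne_top hexp)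

end WeightedNorms

section DoubleSequence

variable (x : ℕ+ → ℕ+ → ℂ) (r : ℕ) (k : ℝ)

lemma iSup_iSup_ofReal_eq_iSup_mul_polyWeight :
    (⨆ i : ℕ+, ⨆ j : ℕ+, ENNReal.ofReal ((i : ℝ) ^ (r : ℝ) * (j : ℝ) ^ (-k) * ‖x i j‖)) =
      ⨆ j, (⨆ i : ℕ+, ENNReal.ofReal ((i : ℝ) ^ (r : ℝ) * ‖x i j‖)) * polyWeight k j := by
  rw [iSup_comm]
  refine iSup_congr fun j => ?_
  rw [ENNReal.iSup_mul]
  refine iSup_congr fun i => ?_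
  rw [polyWeight, ← ENNReal.ofReal_mul (by positivity), mul_right_comm]

lemma tsum_ofReal_eq_tsum_rpow_mul_polyWeight {p : ℝ} (hp : 0 ≤ p) :
    (∑' j : ℕ+, (⨆ i : ℕ+, ENNReal.ofReal ((i : ℝ) ^ (r : ℝ) * ‖x i j‖)) ^ p *
        ENNReal.ofReal ((j : ℝ) ^ (-k * p))) =
      ∑' j, ((⨆ i : ℕ+, ENNReal.ofReal ((i : ℝ) ^ (r : ℝ) * ‖x i j‖)) * polyWeight k j) ^ p := by
  refine tsum_congr fun j => ?_
  rw [ENNReal.mul_rpow_of_nonneg _ _ hp, polyWeight_rpow j hp, polyWeight, neg_mul]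

end DoubleSequence

theorem stmt_18 (k : ℕ) (p : ℝ) (hp : 1 ≤ p) (x : ℕ+ → ℕ+ → ℂ) :
    ((∀ r : ℕ, (∑' j : ℕ+,
        (⨆ i : ℕ+, ENNReal.ofReal ((i : ℝ) ^ (r : ℝ) * ‖x i j‖)) ^ p *
          ENNReal.ofReal ((j : ℝ) ^ (-(k : ℝ) * p))) ≠ ⊤) →
      ∀ k' : ℕ, k ≤ k' → ∀ r : ℕ, (⨆ i : ℕ+, ⨆ j : ℕ+,
        ENNReal.ofReal ((i : ℝ) ^ (r : ℝ) * (j : ℝ) ^ (-(k' : ℝ)) * ‖x i j‖)) ≠ ⊤) ∧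
    ((∀ r : ℕ, (⨆ i : ℕ+, ⨆ j : ℕ+,
        ENNReal.ofReal ((i : ℝ) ^ (r : ℝ) * (j : ℝ) ^ (-(k : ℝ)) * ‖x i j‖)) ≠ ⊤) →
      ∀ k' : ℕ, (k : ℝ) + 1 / p < (k' : ℝ) → ∀ r : ℕ, (∑' j : ℕ+,
        (⨆ i : ℕ+, ENNReal.ofReal ((i : ℝ) ^ (r : ℝ) * ‖x i j‖)) ^ p *
          ENNReal.ofReal ((j : ℝ) ^ (-(k' : ℝ) * p))) ≠ ⊤) := by
  have hp0 : 0 < p := one_pos.trans_le hp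
  refine ⟨fun h k' hk' r => ?_, fun h k' hk' r => ?_⟩
  · have hr := h r
    rw [tsum_ofReal_eq_tsum_rpow_mul_polyWeight x r k hp0.le] at hr
    rw [iSup_iSup_ofReal_eq_iSup_mul_polyWeight]
    exact iSup_mul_polyWeight_ne_top hp0 (by exact_mod_cast hk') hr
  · have hr := h r
    rw [iSup_iSup_ofReal_eq_iSup_mul_polyWeight] at hr
    rw [tsum_ofReal_eq_tsum_rpow_mul_polyWeight x r k' hp0.le]
    exact tsum_rpow_mul_polyWeight_ne_top hp0 hk' hr
end
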